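/- For a p-independent set system with nonnegative weights, the greedy algorithm verifies a correlation gap of p+1: for any distribution D over subsets with marginals q, if S is drawn with each element i included independently with probability q_i, then E[weight of greedy(S)] ≥ (1/(p+1)) · E_{S~D}[w*(S)]. -/

import Mathlib

open Finset

/-- The weighted rank function of a set system. -/
noncomputable def wstar {n : ℕ} (I : Finset (Finset (Fin n)))
    (w : Fin n → ℝ) (S : Finset (Fin n)) : ℝ :=
  (S.powerset.filter (fun T => T ∈ I)).fold max 0 (fun T => ∑ i ∈ T, w i)

/-- Greedy: process elements in the given list order, adding an element whenever
feasibility is preserved. -/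
def greedyAux {n : ℕ} (I : Finset (Finset (Fin n))) :
    List (Fin n) → Finset (Fin n) → Finset (Fin n)
  | [], A => A
  | i :: rest, A =>
      if insert i A ∈ I then greedyAux I rest (insert i A) else greedyAux I rest A

/-- `B` is a base (maximal feasible subset) of `S`. -/
def IsBase {n : ℕ} (I : Finset (Finset (Fin n))) (S B : Finset (Fin n)) : Prop :=
  B ⊆ S ∧ B ∈ I ∧ ∀ x ∈ S \ B, insert x B ∉ I

/-- Marginal probability of element `i` under distribution `D`. -/
noncomputable def marginal {n : ℕ} (D : Finset (Fin n) → ℝ) (i : Fin n) : ℝ :=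
  ∑ S ∈ Finset.univ.filter (fun S : Finset (Fin n) => i ∈ S), D S

/-!
Since the weights are nonnegative and non-increasing along `l`, it suffices (Abel summation) to
show, for every prefix `P` of `l`, that `E_D #(C(S) ∩ P) ≤ (p + 1) · E #(G(S) ∩ P)`, where `C(S)` is
an optimal independent subset of `S` and `G(S)` the greedy solution; moreover `G(S) ∩ P` is the
greedy solution for the order `P`. Fix `S` and an independent draw `S'`. By `p`-independence, the
elements of `C(S) ∩ P` that cannot be added to `G(S')` are at most `p · #G(S')`; the others are
elements of `S ∩ P` that can be added to `G(S')`. Averaging over `S ~ D` replaces these by the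
marginals `q x`, and `q x · Pr[x can be added to G(S')] ≤ Pr[x ∈ G(S')]`, because such an `x` is
not in `S'` and is picked by greedy on `S' ∪ {x}`, which has probability at least `q x` times that
of `S'`.
-/

section IndepProb

variable {α : Type*} [Fintype α] [DecidableEq α] {q : α → ℝ}

noncomputable def indepProb (q : α → ℝ) (S : Finset α) : ℝ :=
  (∏ i ∈ S, q i) * ∏ i ∈ Sᶜ, (1 - q i)

theorem indepProb_nonneg (hq0 : ∀ i, 0 ≤ q i) (hq1 : ∀ i, q i ≤ 1) (S : Finset α) :
    0 ≤ indepProb q S :=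
  mul_nonneg (prod_nonneg fun i _ => hq0 i) (prod_nonneg fun i _ => sub_nonneg.2 (hq1 i))

theorem sum_indepProb (q : α → ℝ) : ∑ S, indepProb q S = 1 := by
  have h := prod_add q (fun i => 1 - q i) univ
  simp only [add_sub_cancel, prod_const_one, powerset_univ] at h
  simp only [indepProb, compl_eq_univ_sdiff]
  exact h.symm

theorem mul_indepProb_le_indepProb_insert (hq0 : ∀ i, 0 ≤ q i) (hq1 : ∀ i, q i ≤ 1)
    {i : α} {S : Finset α} (hi : i ∉ S) :
    q i * indepProb q S ≤ indepProb q (insert i S) := by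
  have hR : 0 ≤ (∏ j ∈ S, q j) * ∏ j ∈ Sᶜ.erase i, (1 - q j) :=
    mul_nonneg (prod_nonneg fun j _ => hq0 j) (prod_nonneg fun j _ => sub_nonneg.2 (hq1 j))
  rw [indepProb, indepProb, compl_insert, prod_insert hi,
    ← mul_prod_erase Sᶜ _ (mem_compl.2 hi)]
  nlinarith [mul_nonneg (mul_self_nonneg (q i)) hR]

theorem mul_sum_indepProb_le (hq0 : ∀ i, 0 ≤ q i) (hq1 : ∀ i, q i ≤ 1) {i : α}
    {E F : Finset α → Prop} [DecidablePred E] [DecidablePred F]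
    (hE : ∀ S, E S → i ∉ S) (hEF : ∀ S, E S → F (insert i S)) :
    q i * ∑ S with E S, indepProb q S ≤ ∑ S with F S, indepProb q S := by
  have hinj : Set.InjOn (insert i) (({S | E S} : Finset (Finset α)) : Set (Finset α)) := by
    intro S hS T hT hST
    rw [← erase_insert (hE S (mem_filter.1 hS).2), hST, erase_insert (hE T (mem_filter.1 hT).2)]
  calc q i * ∑ S with E S, indepProb q S
      ≤ ∑ S with E S, indepProb q (insert i S) := by
        rw [mul_sum]
        exact sum_le_sum fun S hS =>
          mul_indepProb_le_indepProb_insert hq0 hq1 (hE S (mem_filter.1 hS).2)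
    _ = ∑ S ∈ ({S | E S} : Finset (Finset α)).image (insert i), indepProb q S :=
        (sum_image hinj).symm
    _ ≤ ∑ S with F S, indepProb q S := by
        refine sum_le_sum_of_subset_of_nonneg ?_ fun S _ _ => indepProb_nonneg hq0 hq1 S
        intro T hT
        obtain ⟨S, hS, rfl⟩ := mem_image.1 hT
        exact mem_filter.2 ⟨mem_univ _, hEF S (mem_filter.1 hS).2⟩

end IndepProb

section DoubleCounting

variable {α β : Type*} [Fintype α] [DecidableEq α]

theorem sum_mul_sum_mem_comm (s : Finset β) (ν : β → ℝ) (F : β → Finset α) (g : α → ℝ) :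
    ∑ b ∈ s, ν b * ∑ i ∈ F b, g i = ∑ i, g i * ∑ b ∈ s with i ∈ F b, ν b := by
  calc ∑ b ∈ s, ν b * ∑ i ∈ F b, g i = ∑ b ∈ s, ∑ i, if i ∈ F b then g i * ν b else 0 := by
        refine sum_congr rfl fun b _ => ?_
        rw [mul_sum, ← sum_filter, filter_mem_eq_inter, univ_inter]
        exact sum_congr rfl fun i _ => mul_comm _ _
    _ = _ := by
        rw [sum_comm]
        simp_rw [mul_sum, sum_filter]

theorem sum_mul_card_inter_eq (s : Finset β) (ν : β → ℝ) (F : β → Finset α) (P : Finset α) :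
    ∑ b ∈ s, ν b * (#(F b ∩ P) : ℝ) = ∑ i ∈ P, ∑ b ∈ s with i ∈ F b, ν b := by
  have hcard : ∀ b, (#(F b ∩ P) : ℝ) = ∑ i ∈ F b, if i ∈ P then 1 else 0 := fun b => by
    rw [← filter_mem_eq_inter, natCast_card_filter]
  simp_rw [hcard, sum_mul_sum_mem_comm, boole_mul, ← sum_filter, filter_mem_eq_inter, univ_inter]

end DoubleCounting

theorem List.sum_map_mul_le_of_forall_isPrefix {α : Type*} {w f g : α → ℝ} {l : List α}
    (hw : ∀ a ∈ l, 0 ≤ w a) (hl : l.Pairwise fun a b => w b ≤ w a)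
    (h : ∀ l₁, l₁ <+: l → (l₁.map f).sum ≤ (l₁.map g).sum) :
    (l.map fun a => w a * f a).sum ≤ (l.map fun a => w a * g a).sum := by
  induction l using List.reverseRecOn generalizing w with
  | nil => simp
  | append_singleton l a ih =>
    rw [List.pairwise_append] at hl
    -- Abel summation: peel off the smallest weight `w a`, which multiplies a full prefix sum.
    have hsplit : ∀ u : α → ℝ, ((l ++ [a]).map fun b => w b * u b).sum =
        (l.map fun b => (w b - w a) * u b).sum + w a * ((l ++ [a]).map u).sum := by
      intro u
      have hu : (l.map fun b => w b * u b) = l.map fun b => (w b - w a) * u b + w a * u b :=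
        List.map_congr_left fun b _ => by ring
      simp only [List.map_append, List.sum_append, hu, List.sum_map_add, List.sum_map_mul_left,
        List.map_cons, List.map_nil, List.sum_cons, List.sum_nil]
      ring
    have hle := ih (w := fun b => w b - w a)
      (fun b hb => sub_nonneg.2 (hl.2.2 b hb a (List.mem_singleton_self a)))
      (hl.1.imp fun h => sub_le_sub_right h _)
      (fun l₁ hl₁ => h l₁ (hl₁.trans (List.prefix_append _ _)))
    rw [hsplit f, hsplit g]
    gcongr
    · exact hw a (List.mem_append_right _ (List.mem_singleton_self a))
    · exact h _ (List.prefix_refl _)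

section SetSystem

variable {n : ℕ} {I : Finset (Finset (Fin n))}

theorem exists_wstar_le_sum (w : Fin n → ℝ) (hempty : ∅ ∈ I) (S : Finset (Fin n)) :
    ∃ C ⊆ S, C ∈ I ∧ wstar I w S ≤ ∑ i ∈ C, w i := by
  have hne : ∅ ∈ S.powerset.filter (· ∈ I) := mem_filter.2 ⟨empty_mem_powerset S, hempty⟩
  obtain ⟨C, hC, hmax⟩ := exists_max_image _ (fun T => ∑ i ∈ T, w i) ⟨∅, hne⟩
  obtain ⟨hCS, hCI⟩ := mem_filter.1 hC
  refine ⟨C, mem_powerset.1 hCS, hCI, (fold_max_le _).2 ⟨?_, hmax⟩⟩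
  simpa using hmax ∅ hne

theorem exists_isBase_superset {U C : Finset (Fin n)} (hCU : C ⊆ U) (hC : C ∈ I) :
    ∃ B, C ⊆ B ∧ IsBase I U B := by
  have hne : C ∈ U.powerset.filter (fun B => C ⊆ B ∧ B ∈ I) :=
    mem_filter.2 ⟨mem_powerset.2 hCU, subset_rfl, hC⟩
  obtain ⟨B, hB, hmax⟩ := exists_max_image _ card ⟨C, hne⟩
  obtain ⟨hBU, hCB, hBI⟩ := mem_filter.1 hB
  refine ⟨B, hCB, mem_powerset.1 hBU, hBI, fun x hx hxI => ?_⟩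
  obtain ⟨hxU, hxB⟩ := mem_sdiff.1 hx
  have := hmax (insert x B) (mem_filter.2
    ⟨mem_powerset.2 (insert_subset hxU (mem_powerset.1 hBU)), hCB.trans (subset_insert x B), hxI⟩)
  rw [card_insert_of_notMem hxB] at this
  omega

/-- The elements of `C` that cannot be added to `B` lie in a base of `B ∪ C` together with
`B` itself, so there are at most `p * #B` of them. -/
theorem card_le_mul_card_add_card_filter_insert_mem {p : ℝ}
    (hdown : ∀ S T : Finset (Fin n), S ⊆ T → T ∈ I → S ∈ I)
    (hpind : ∀ S B₁ B₂ : Finset (Fin n), S.Nonempty → IsBase I S B₁ →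
      IsBase I S B₂ → (B₁.card : ℝ) ≤ p * B₂.card)
    {B C : Finset (Fin n)} (hB : B ∈ I) (hC : C ∈ I) :
    (#C : ℝ) ≤ p * #B + #{x ∈ C | x ∉ B ∧ insert x B ∈ I} := by
  set C₁ := {x ∈ C | ¬(x ∉ B ∧ insert x B ∈ I)}
  have hC₁ : (#C₁ : ℝ) ≤ p * #B := by
    have hBbase : IsBase I (B ∪ C₁) B := by
      refine ⟨subset_union_left, hB, fun x hx => ?_⟩
      obtain ⟨hxU, hxB⟩ := mem_sdiff.1 hx
      have hxC₁ : x ∈ C₁ := (mem_union.1 hxU).resolve_left hxB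
      simpa [hxB] using (mem_filter.1 hxC₁).2
    obtain ⟨B₁, hCB₁, hB₁⟩ :=
      exists_isBase_superset (U := B ∪ C₁) subset_union_right (hdown C₁ C (filter_subset _ _) hC)
    rcases (B ∪ C₁).eq_empty_or_nonempty with hU | hU
    · obtain ⟨rfl, hC₁e⟩ := union_eq_empty.1 hU
      simp [hC₁e]
    · calc (#C₁ : ℝ) ≤ #B₁ := by exact_mod_cast card_le_card hCB₁
        _ ≤ p * #B := hpind _ B₁ B hU hB₁ hBbase
  have hsplit := card_filter_add_card_filter_not (s := C) fun x => ¬(x ∉ B ∧ insert x B ∈ I)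
  simp only [not_not] at hsplit
  rw [← hsplit]
  push_cast
  linarith

end SetSystem

section Marginal

variable {n : ℕ} {D : Finset (Fin n) → ℝ}

theorem marginal_nonneg (hD0 : ∀ S, 0 ≤ D S) (i : Fin n) : 0 ≤ marginal D i :=
  sum_nonneg fun S _ => hD0 S

theorem marginal_le_one (hD0 : ∀ S, 0 ≤ D S) (hD1 : ∑ S : Finset (Fin n), D S = 1) (i : Fin n) :
    marginal D i ≤ 1 :=
  hD1 ▸ sum_le_sum_of_subset_of_nonneg (filter_subset _ _) fun S _ _ => hD0 S

theorem sum_mul_card_inter_eq_sum_marginal (D : Finset (Fin n) → ℝ) (A : Finset (Fin n)) :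
    ∑ S, D S * (#(S ∩ A) : ℝ) = ∑ i ∈ A, marginal D i :=
  sum_mul_card_inter_eq univ D id A

end Marginal

section Greedy

variable {n : ℕ} {I : Finset (Finset (Fin n))}

theorem subset_greedyAux (L : List (Fin n)) (A : Finset (Fin n)) : A ⊆ greedyAux I L A := by
  induction L generalizing A with
  | nil => exact subset_rfl
  | cons i L ih =>
    rw [greedyAux]
    split
    · exact (subset_insert i A).trans (ih _)
    · exact ih A

theorem greedyAux_subset_union (L : List (Fin n)) (A : Finset (Fin n)) :
    greedyAux I L A ⊆ A ∪ L.toFinset := by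
  induction L generalizing A with
  | nil => exact subset_union_left
  | cons i L ih =>
    rw [greedyAux, List.toFinset_cons]
    split
    · refine (ih _).trans ?_
      rw [insert_union, ← union_insert]
    · exact (ih A).trans (union_subset_union subset_rfl (subset_insert i _))

theorem greedyAux_mem (L : List (Fin n)) {A : Finset (Fin n)} (hA : A ∈ I) :
    greedyAux I L A ∈ I := by
  induction L generalizing A with
  | nil => exact hA
  | cons i L ih =>
    rw [greedyAux]
    split
    · exact ih ‹_›
    · exact ih hA

theorem greedyAux_append (L₁ L₂ : List (Fin n)) (A : Finset (Fin n)) :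
    greedyAux I (L₁ ++ L₂) A = greedyAux I L₂ (greedyAux I L₁ A) := by
  induction L₁ generalizing A with
  | nil => rfl
  | cons i L₁ ih =>
    simp only [List.cons_append, greedyAux]
    split <;> exact ih _

theorem insert_greedyAux_notMem (hdown : ∀ S T : Finset (Fin n), S ⊆ T → T ∈ I → S ∈ I)
    {L : List (Fin n)} {A : Finset (Fin n)} {x : Fin n} (hx : x ∈ L)
    (hxA : x ∉ greedyAux I L A) : insert x (greedyAux I L A) ∉ I := by
  induction L generalizing A with
  | nil => simp at hx
  | cons i L ih =>
    rw [greedyAux] at hxA ⊢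
    rcases List.mem_cons.1 hx with rfl | hx
    · split at hxA
      · exact absurd (subset_greedyAux L _ (mem_insert_self x A)) hxA
      · rw [if_neg ‹_›]
        exact fun h => ‹insert x A ∉ I› (hdown _ _ (insert_subset_insert x (subset_greedyAux L A)) h)
    · split at hxA <;> simp only [*, if_true, if_false] <;> exact ih hx hxA

theorem mem_greedyAux_of_insert_mem (hdown : ∀ S T : Finset (Fin n), S ⊆ T → T ∈ I → S ∈ I)
    {L₁ L₂ : List (Fin n)} {A : Finset (Fin n)} {i : Fin n}
    (h : insert i (greedyAux I (L₁ ++ L₂) A) ∈ I) : i ∈ greedyAux I (L₁ ++ i :: L₂) A := by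
  rw [greedyAux_append] at h ⊢
  have hi : insert i (greedyAux I L₁ A) ∈ I :=
    hdown _ _ (insert_subset_insert i (subset_greedyAux L₂ _)) h
  rw [greedyAux, if_pos hi]
  exact subset_greedyAux L₂ _ (mem_insert_self i _)

def greedyOn (I : Finset (Finset (Fin n))) (L : List (Fin n)) (S : Finset (Fin n)) :
    Finset (Fin n) :=
  greedyAux I (L.filter fun i => i ∈ S) ∅

theorem greedyOn_mem (hempty : ∅ ∈ I) (L : List (Fin n)) (S : Finset (Fin n)) :
    greedyOn I L S ∈ I :=
  greedyAux_mem _ hempty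

theorem greedyOn_subset (L : List (Fin n)) (S : Finset (Fin n)) :
    greedyOn I L S ⊆ L.toFinset := by
  intro x hx
  have := greedyAux_subset_union _ _ hx
  rw [empty_union, List.mem_toFinset, List.mem_filter] at this
  exact List.mem_toFinset.2 this.1

theorem greedyOn_append_inter {L₁ L₂ : List (Fin n)} (h : (L₁ ++ L₂).Nodup)
    (S : Finset (Fin n)) : greedyOn I (L₁ ++ L₂) S ∩ L₁.toFinset = greedyOn I L₁ S := by
  rw [greedyOn, List.filter_append, greedyAux_append]
  refine (subset_inter (subset_greedyAux _ _) (greedyOn_subset L₁ S)).antisymm' fun x hx => ?_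
  obtain ⟨hxG, hx₁⟩ := mem_inter.1 hx
  refine (mem_union.1 (greedyAux_subset_union _ _ hxG)).resolve_right fun hx₂ => ?_
  rw [List.mem_toFinset, List.mem_filter] at hx₂
  exact (List.nodup_append.1 h).2.2 x (List.mem_toFinset.1 hx₁) x hx₂.1 rfl

theorem insert_greedyOn_notMem (hdown : ∀ S T : Finset (Fin n), S ⊆ T → T ∈ I → S ∈ I)
    {L : List (Fin n)} {S : Finset (Fin n)} {x : Fin n} (hxL : x ∈ L) (hxS : x ∈ S)
    (hx : x ∉ greedyOn I L S) : insert x (greedyOn I L S) ∉ I :=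
  insert_greedyAux_notMem hdown (List.mem_filter.2 ⟨hxL, by simpa using hxS⟩) hx

theorem mem_greedyOn_insert (hdown : ∀ S T : Finset (Fin n), S ⊆ T → T ∈ I → S ∈ I)
    {L : List (Fin n)} (hL : L.Nodup) {S : Finset (Fin n)} {i : Fin n} (hiL : i ∈ L)
    (hiS : i ∉ S) (h : insert i (greedyOn I L S) ∈ I) : i ∈ greedyOn I L (insert i S) := by
  obtain ⟨L₁, L₂, rfl⟩ := List.append_of_mem hiL
  have hi₁ : i ∉ L₁ := fun hi => (List.nodup_append.1 hL).2.2 i hi i List.mem_cons_self rfl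
  have hi₂ : i ∉ L₂ := (List.nodup_cons.1 (List.nodup_append.1 hL).2.1).1
  have hfilter : ∀ L' : List (Fin n), i ∉ L' →
      (L'.filter fun x => x ∈ insert i S) = L'.filter fun x => x ∈ S := fun L' hi =>
    List.filter_congr fun x hx => by simp [mem_insert, ne_of_mem_of_not_mem hx hi]
  unfold greedyOn at h ⊢
  rw [List.filter_append, List.filter_cons_of_neg (by simpa using hiS)] at h
  rw [List.filter_append, List.filter_cons_of_pos (by simp), hfilter L₁ hi₁, hfilter L₂ hi₂]
  exact mem_greedyAux_of_insert_mem hdown h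

end Greedy

section CorrelationGap

variable {n : ℕ} {I : Finset (Finset (Fin n))}

theorem sum_indepProb_mul_sum_addable_le (hdown : ∀ S T : Finset (Fin n), S ⊆ T → T ∈ I → S ∈ I)
    {L : List (Fin n)} (hL : L.Nodup) {q : Fin n → ℝ} (hq0 : ∀ i, 0 ≤ q i) (hq1 : ∀ i, q i ≤ 1) :
    ∑ S, indepProb q S *
        ∑ x ∈ L.toFinset with x ∉ greedyOn I L S ∧ insert x (greedyOn I L S) ∈ I, q x ≤
      ∑ S, indepProb q S * (#(greedyOn I L S) : ℝ) := by
  have hcard := sum_mul_card_inter_eq univ (indepProb q) (greedyOn I L) univ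
  simp only [inter_univ] at hcard
  rw [sum_mul_sum_mem_comm, hcard]
  refine sum_le_sum fun x _ => ?_
  have hxS : ∀ S, x ∈ L.toFinset ∧ x ∉ greedyOn I L S ∧ insert x (greedyOn I L S) ∈ I →
      x ∉ S := fun S ⟨hxL, hxB, hxI⟩ hxS =>
    insert_greedyOn_notMem hdown (List.mem_toFinset.1 hxL) hxS hxB hxI
  refine mul_sum_indepProb_le hq0 hq1 (fun S hS => hxS S (mem_filter.1 hS)) fun S hS => ?_
  obtain ⟨hxL, -, hxI⟩ := mem_filter.1 hS
  exact mem_greedyOn_insert hdown hL (List.mem_toFinset.1 hxL) (hxS S (mem_filter.1 hS)) hxI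

theorem sum_mul_card_inter_le_greedyOn {p : ℝ} (hempty : ∅ ∈ I)
    (hdown : ∀ S T : Finset (Fin n), S ⊆ T → T ∈ I → S ∈ I)
    (hpind : ∀ S B₁ B₂ : Finset (Fin n), S.Nonempty → IsBase I S B₁ →
      IsBase I S B₂ → (B₁.card : ℝ) ≤ p * B₂.card)
    {L : List (Fin n)} (hL : L.Nodup) {D : Finset (Fin n) → ℝ}
    (hD0 : ∀ S, 0 ≤ D S) (hD1 : ∑ S : Finset (Fin n), D S = 1)
    {C : Finset (Fin n) → Finset (Fin n)} (hCS : ∀ S, C S ⊆ S) (hCI : ∀ S, C S ∈ I) :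
    ∑ S, D S * (#(C S ∩ L.toFinset) : ℝ) ≤
      (p + 1) * ∑ S, indepProb (marginal D) S * (#(greedyOn I L S) : ℝ) := by
  set q := marginal D
  set B := greedyOn I L
  set A : Finset (Fin n) → Finset (Fin n) :=
    fun S' => {x ∈ L.toFinset | x ∉ B S' ∧ insert x (B S') ∈ I}
  have hpoint : ∀ S S', (#(C S ∩ L.toFinset) : ℝ) ≤ p * #(B S') + #(S ∩ A S') := by
    intro S S'
    refine (card_le_mul_card_add_card_filter_insert_mem hdown hpind (greedyOn_mem hempty L S')
      (hdown _ _ inter_subset_left (hCI S))).trans ?_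
    gcongr
    intro x hx
    obtain ⟨hx, hxB, hxI⟩ := mem_filter.1 hx
    exact mem_inter.2 ⟨hCS S (mem_inter.1 hx).1, mem_filter.2 ⟨(mem_inter.1 hx).2, hxB, hxI⟩⟩
  have hD : ∀ S', ∑ S, D S * (#(C S ∩ L.toFinset) : ℝ) ≤ p * #(B S') + ∑ x ∈ A S', q x := by
    intro S'
    calc ∑ S, D S * (#(C S ∩ L.toFinset) : ℝ)
        ≤ ∑ S, D S * (p * #(B S') + #(S ∩ A S')) :=
          sum_le_sum fun S _ => mul_le_mul_of_nonneg_left (hpoint S S') (hD0 S)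
      _ = p * #(B S') + ∑ x ∈ A S', q x := by
          rw [← sum_mul_card_inter_eq_sum_marginal]
          simp_rw [mul_add, sum_add_distrib, ← sum_mul, hD1, one_mul]
  have hq0 := marginal_nonneg hD0
  have hq1 := marginal_le_one hD0 hD1
  calc ∑ S, D S * (#(C S ∩ L.toFinset) : ℝ)
      = ∑ S', indepProb q S' * ∑ S, D S * (#(C S ∩ L.toFinset) : ℝ) := by
        rw [← sum_mul, sum_indepProb, one_mul]
    _ ≤ ∑ S', indepProb q S' * (p * #(B S') + ∑ x ∈ A S', q x) :=
        sum_le_sum fun S' _ => mul_le_mul_of_nonneg_left (hD S') (indepProb_nonneg hq0 hq1 S')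
    _ = p * ∑ S', indepProb q S' * #(B S') + ∑ S', indepProb q S' * ∑ x ∈ A S', q x := by
        simp_rw [mul_add, sum_add_distrib, mul_left_comm _ p, ← mul_sum]
    _ ≤ p * ∑ S', indepProb q S' * #(B S') + ∑ S', indepProb q S' * #(B S') :=
        add_le_add_right (sum_indepProb_mul_sum_addable_le hdown hL hq0 hq1) _
    _ = (p + 1) * ∑ S', indepProb q S' * #(B S') := by ring

end CorrelationGap

/-- In a `p`-independent system, greedy verifies a correlation gap of `p+1`:
the expected greedy weight on an independent draw with the marginals of `D`
is at least `1/(p+1)` times the expected weighted rank under `D`. -/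
theorem greedy_verifies_correlation_gap {n : ℕ}
    (I : Finset (Finset (Fin n))) (w : Fin n → ℝ) (p : ℝ)
    (hp : 0 < p)
    (hw : ∀ i, 0 ≤ w i)
    (hempty : ∅ ∈ I)
    (hdown : ∀ S T : Finset (Fin n), S ⊆ T → T ∈ I → S ∈ I)
    (hpind : ∀ S B₁ B₂ : Finset (Fin n), S.Nonempty → IsBase I S B₁ →
      IsBase I S B₂ → (B₁.card : ℝ) ≤ p * B₂.card)
    (l : List (Fin n)) (hnodup : l.Nodup) (henum : l.toFinset = Finset.univ)
    (hsorted : l.Pairwise (fun a b => w b ≤ w a))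
    (D : Finset (Fin n) → ℝ)
    (hD0 : ∀ S, 0 ≤ D S) (hD1 : ∑ S : Finset (Fin n), D S = 1) :
    (1 / (p + 1)) * (∑ S : Finset (Fin n), D S * wstar I w S) ≤
      ∑ S : Finset (Fin n),
        ((∏ i ∈ S, marginal D i) * ∏ i ∈ Sᶜ, (1 - marginal D i)) *
          ∑ i ∈ greedyAux I (l.filter (fun i => i ∈ S)) ∅, w i := by
  set q := marginal D
  choose C hCS hCI hwC using exists_wstar_le_sum w hempty
  have hprefix : ∀ l₁, l₁ <+: l →
      (l₁.map fun i => ∑ S with i ∈ C S, D S).sum ≤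
        (l₁.map fun i => (p + 1) * ∑ S with i ∈ greedyOn I l S, indepProb q S).sum := by
    rintro l₁ ⟨l₂, rfl⟩
    have hnd₁ := (List.nodup_append.1 hnodup).1
    rw [← List.sum_toFinset _ hnd₁, ← List.sum_toFinset _ hnd₁, ← mul_sum,
      ← sum_mul_card_inter_eq, ← sum_mul_card_inter_eq]
    simp_rw [greedyOn_append_inter hnodup]
    exact sum_mul_card_inter_le_greedyOn hempty hdown hpind hnd₁ hD0 hD1 hCS hCI
  have hdom := List.sum_map_mul_le_of_forall_isPrefix (fun i _ => hw i) hsorted hprefix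
  rw [← List.sum_toFinset _ hnodup, ← List.sum_toFinset _ hnodup, henum] at hdom
  change _ ≤ ∑ S, indepProb q S * ∑ i ∈ greedyOn I l S, w i
  rw [sum_mul_sum_mem_comm, one_div, inv_mul_le_iff₀ (by linarith), mul_sum]
  calc ∑ S, D S * wstar I w S ≤ ∑ S, D S * ∑ i ∈ C S, w i :=
        sum_le_sum fun S _ => mul_le_mul_of_nonneg_left (hwC S) (hD0 S)
    _ = ∑ i, w i * ∑ S with i ∈ C S, D S := sum_mul_sum_mem_comm _ _ _ _
    _ ≤ _ := hdom.trans_eq (sum_congr rfl fun i _ => mul_left_comm _ _ _)
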